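/- arXiv:2002.01748 — 2 statements merged into one kernel-verified Lean document; each statement's English description precedes it below -/
import Mathlib

section
/- Let S = (s_1,...,s_n) with s_1 ≤ s_2 ≤ ... ≤ s_n < r and s_1 + ... + s_n ≥ rk. Define t_1 to be the largest integer with s_1 + ... + s_{t_1} < rk, and inductively t_i (for i ≥ 2) the largest integer such that the sum of s_j for j from t_1+...+t_{i-1}+1 to t_1+...+t_{i-1}+t_i is less than r. If the process terminates with t_1 + ... + t_l = n, then χ(KG^r_S(n,k)) ≤ l. -/
open Finset

/-- A coloring of the vertices is proper if no edge is monochromatic. -/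
def IsProperColoring {V : Type*} (E : Set (Multiset V)) {t : ℕ} (c : V → Fin t) : Prop :=
  ∀ e ∈ E, ∃ a ∈ e, ∃ b ∈ e, c a ≠ c b

/-- The chromatic number of a hypergraph with edge set `E`, as an extended natural number
(infinity if no proper coloring exists, e.g. in the presence of a loop edge). -/
noncomputable def hypChromatic {V : Type*} (E : Set (Multiset V)) : ℕ∞ :=
  sInf {N : ℕ∞ | ∃ t : ℕ, N = (t : ℕ∞) ∧ ∃ c : V → Fin t, IsProperColoring E c}

/-- Vertices of `KG^r_S(n,k)`: the `k`-subsets of `[n]`. -/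
def KGSVertex (n k : ℕ) : Type :=
  {A : Finset (Fin n) // A.card = k}

/-- Edges of `KG^r_S(n,k)`: multisets `{A_1, …, A_r}` of `k`-subsets that are `S`-disjoint,
i.e. each `i ∈ [n]` belongs to at most `s i` of the sets. -/
def KGSEdges (n k r : ℕ) (s : Fin n → ℕ) : Set (Multiset (KGSVertex n k)) :=
  {e | Multiset.card e = r ∧ ∀ x : Fin n, (e.filter fun A => x ∈ A.1).card ≤ s x}

/-- The sum of `s j` over indices `j` of `[n]` (0-indexed) lying in `[a, b)`. -/
def blockSum (n : ℕ) (s : Fin n → ℕ) (a b : ℕ) : ℕ :=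
  ∑ j ∈ Finset.univ.filter (fun j : Fin n => a ≤ j.val ∧ j.val < b), s j

/-!
Colour a `k`-set by `0` if it lies in the first block `[0, T 1)` and otherwise by the index of
some later block `[T i, T (i + 1))` that it meets. If all members of an `S`-disjoint edge lay in
the first block, double counting incidences inside it would give
`r * k ≤ blockSum n s 0 (T 1) < r * k`; if all of them met the same later block, the same count
would give `r ≤ blockSum n s (T i) (T (i + 1)) < r`.
-/

lemma hypChromatic_le_of_isProperColoring {V : Type*} {E : Set (Multiset V)} {t : ℕ}
    (c : V → Fin t) (hc : IsProperColoring E c) : hypChromatic E ≤ t :=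
  sInf_le ⟨t, rfl, c, hc⟩

lemma IsProperColoring.of_not_monochromatic {V : Type*} {E : Set (Multiset V)} {t : ℕ}
    {c : V → Fin t} (ht : 0 < t) (h : ∀ e ∈ E, ∀ j, ¬ ∀ a ∈ e, c a = j) :
    IsProperColoring E c := by
  intro e he
  by_contra hmono
  push Not at hmono
  rcases e.empty_or_exists_mem with rfl | ⟨a, ha⟩
  · exact h 0 he ⟨0, ht⟩ (by simp)
  · exact h e he (c a) fun b hb => hmono b hb a ha

lemma Multiset.sum_card_filter_mem_eq_sum_map_card_inter {ι α : Type*} [DecidableEq α]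
    (e : Multiset ι) (f : ι → Finset α) (B : Finset α) :
    ∑ x ∈ B, Multiset.card (e.filter fun i => x ∈ f i) = (e.map fun i => #(B ∩ f i)).sum := by
  induction e using Multiset.induction with
  | empty => simp
  | cons a e ih =>
    have hcons : ∀ x, Multiset.card ((a ::ₘ e).filter fun i => x ∈ f i)
        = (if x ∈ f a then 1 else 0) + Multiset.card (e.filter fun i => x ∈ f i) := by
      intro x
      rw [Multiset.filter_cons]
      split_ifs <;> simp [add_comm]
    simp_rw [hcons]
    rw [sum_add_distrib, ih, Multiset.map_cons, Multiset.sum_cons, sum_boole, Nat.cast_id,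
      filter_mem_eq_inter]

lemma KGSEdges.mul_le_sum_of_le_card_inter {n k r : ℕ} {s : Fin n → ℕ}
    {e : Multiset (KGSVertex n k)} (he : e ∈ KGSEdges n k r s) (B : Finset (Fin n)) {m : ℕ}
    (hm : ∀ A ∈ e, m ≤ #(B ∩ A.1)) : r * m ≤ ∑ x ∈ B, s x := by
  obtain ⟨hcard, hdisj⟩ := he
  calc r * m = (e.map fun _ => m).sum := by simp [hcard]
    _ ≤ (e.map fun A => #(B ∩ A.1)).sum := Multiset.sum_map_le_sum_map _ _ hm
    _ = ∑ x ∈ B, Multiset.card (e.filter fun A => x ∈ A.1) :=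
      (Multiset.sum_card_filter_mem_eq_sum_map_card_inter e _ B).symm
    _ ≤ ∑ x ∈ B, s x := sum_le_sum fun x _ => hdisj x

lemma exists_lt_le_lt_succ (T : ℕ → ℕ) {l m : ℕ} (h0 : T 0 ≤ m) (hl : m < T l) :
    ∃ i < l, T i ≤ m ∧ m < T (i + 1) := by
  induction l with
  | zero => omega
  | succ l ih =>
    by_cases hm : m < T l
    · obtain ⟨i, hil, hi⟩ := ih hm
      exact ⟨i, by omega, hi⟩
    · exact ⟨l, by omega, by omega, hl⟩

-- `blockSum n s a b` is by definition `∑ x ∈ indexBlock n a b, s x`.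
def indexBlock (n a b : ℕ) : Finset (Fin n) :=
  univ.filter fun j : Fin n => a ≤ j.val ∧ j.val < b

section BlockColoring

variable {n k l : ℕ} (T : ℕ → ℕ) (hl : 0 < l)

open Classical in
noncomputable def blockColoring (A : KGSVertex n k) : Fin l :=
  if h : ∃ i : Fin l, i.val ≠ 0 ∧ ∃ x ∈ A.1, x ∈ indexBlock n (T i) (T (i + 1)) then h.choose
  else ⟨0, hl⟩

variable {T hl}

lemma subset_indexBlock_of_blockColoring_eq_zero (hT0 : T 0 = 0) (hTl : T l = n)
    {A : KGSVertex n k} (hA : (blockColoring T hl A).val = 0) :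
    A.1 ⊆ indexBlock n 0 (T 1) := by
  intro x hx
  unfold blockColoring at hA
  split_ifs at hA with h
  · exact absurd hA h.choose_spec.1
  · obtain ⟨i, hil, hxi⟩ := exists_lt_le_lt_succ T (l := l) (m := x.val)
      (by omega) (by omega)
    by_cases hi : i = 0
    · subst hi
      simpa [indexBlock] using hxi.2
    · exact absurd ⟨⟨i, hil⟩, hi, x, hx, by simpa [indexBlock] using hxi⟩ h

lemma exists_mem_indexBlock_of_blockColoring_eq {A : KGSVertex n k} {j : Fin l}
    (hA : blockColoring T hl A = j) (hj : j.val ≠ 0) :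
    ∃ x ∈ A.1, x ∈ indexBlock n (T j) (T (j + 1)) := by
  unfold blockColoring at hA
  split_ifs at hA with h
  · exact hA ▸ h.choose_spec.2
  · exact absurd (congrArg Fin.val hA).symm hj

lemma isProperColoring_blockColoring {r : ℕ} {s : Fin n → ℕ} (hT0 : T 0 = 0) (hTl : T l = n)
    (hfirst : blockSum n s 0 (T 1) < r * k)
    (hlater : ∀ i : Fin l, i.val ≠ 0 → blockSum n s (T i) (T (i + 1)) < r) :
    IsProperColoring (KGSEdges n k r s) (blockColoring T hl) := by
  refine .of_not_monochromatic hl fun e he j hmono => ?_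
  by_cases hj : j.val = 0
  · have hsub (A) (hA : A ∈ e) : A.1 ⊆ indexBlock n 0 (T 1) :=
      subset_indexBlock_of_blockColoring_eq_zero hT0 hTl (hmono A hA ▸ hj)
    have := KGSEdges.mul_le_sum_of_le_card_inter he _ (m := k) fun A hA => by
      rw [inter_eq_right.mpr (hsub A hA), A.2]
    exact absurd this (not_le.mpr hfirst)
  · have := KGSEdges.mul_le_sum_of_le_card_inter he _ (m := 1) fun A hA => by
      obtain ⟨x, hx, hxB⟩ := exists_mem_indexBlock_of_blockColoring_eq (hmono A hA) hj
      exact card_pos.mpr ⟨x, mem_inter.mpr ⟨hxB, hx⟩⟩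
    rw [mul_one] at this
    exact absurd this (not_le.mpr (hlater j hj))

end BlockColoring

theorem chromatic_KGS_le_greedy_general (n k r l : ℕ) (s : Fin n → ℕ) (T : ℕ → ℕ)
    (hl : 1 ≤ l)
    (hT0 : T 0 = 0) (hTl : T l = n)
    (ht1 : blockSum n s 0 (T 1) < r * k ∧ (T 1 = n ∨ r * k ≤ blockSum n s 0 (T 1 + 1)))
    (hti : ∀ i, 2 ≤ i → i ≤ l →
      blockSum n s (T (i - 1)) (T i) < r ∧
        (T i = n ∨ r ≤ blockSum n s (T (i - 1)) (T i + 1))) :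
    hypChromatic (KGSEdges n k r s) ≤ (l : ℕ∞) := by
  refine hypChromatic_le_of_isProperColoring (blockColoring T hl) ?_
  refine isProperColoring_blockColoring hT0 hTl ht1.1 fun i hi => ?_
  simpa using (hti (i + 1) (by omega) (by omega)).1

/-- Erdős' greedy upper bound: if `s_1 ≤ … ≤ s_n < r`, `∑ s_i ≥ rk`, and
`T i = t_1 + ⋯ + t_i` are the partial sums of the greedy block sizes
(`t_1` largest with `s_1 + ⋯ + s_{t_1} < rk`; `t_i` largest with the sum of the next
`t_i` values less than `r`), terminating with `T l = n`, then `χ(KG^r_S(n,k)) ≤ l`. -/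
theorem chromatic_KGS_le_greedy (n k r l : ℕ) (s : Fin n → ℕ) (T : ℕ → ℕ)
    (hk : 1 ≤ k) (hr : 2 ≤ r) (hl : 1 ≤ l)
    (hmono : ∀ i j : Fin n, i ≤ j → s i ≤ s j)
    (hsr : ∀ i, s i < r)
    (hsum : r * k ≤ ∑ i, s i)
    (hT0 : T 0 = 0) (hTl : T l = n)
    (hTmono : ∀ i < l, T i < T (i + 1))
    (ht1 : blockSum n s 0 (T 1) < r * k ∧ (T 1 = n ∨ r * k ≤ blockSum n s 0 (T 1 + 1)))
    (hti : ∀ i, 2 ≤ i → i ≤ l →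
      blockSum n s (T (i - 1)) (T i) < r ∧
        (T i = n ∨ r ≤ blockSum n s (T (i - 1)) (T i + 1))) :
    hypChromatic (KGSEdges n k r s) ≤ (l : ℕ∞) :=
  chromatic_KGS_le_greedy_general n k r l s T hl hT0 hTl ht1 hti
end

section
/- If the conclusion of Theorem (χ(KG^r(n,k,P)) = ⌈(n-r(k-1))/(r-1)⌉ for all partitions P of [n] with all blocks of size ≤ r, whenever n ≥ rk) holds for r = r_1 and for r = r_2, then it holds for r = r_1 r_2. -/
open Finset

/-- `P : Fin l → Finset (Fin n)` is a partition of `[n]` into nonempty blocks. -/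
def IsPartition (n l : ℕ) (P : Fin l → Finset (Fin n)) : Prop :=
  (∀ j, (P j).Nonempty) ∧ ∀ x : Fin n, ∃! j, x ∈ P j

/-- Vertices of `KG^r(n,k,P)`: `k`-subsets of `[n]` meeting each block of `P`
in at most one element. -/
def KGPVertex (n k l : ℕ) (P : Fin l → Finset (Fin n)) : Type :=
  {A : Finset (Fin n) // A.card = k ∧ ∀ j, (A ∩ P j).card ≤ 1}

/-- Edges of `KG^r(n,k,P)`: `r`-subsets of vertices that are pairwise disjoint. -/
def KGPEdges (n k l r : ℕ) (P : Fin l → Finset (Fin n)) :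
    Set (Multiset (KGPVertex n k l P)) :=
  {e | Multiset.card e = r ∧ e.Nodup ∧
    ∀ a ∈ e, ∀ b ∈ e, a ≠ b → Disjoint a.1 b.1}

/-- The conclusion of the main theorem for a given uniformity `r`: for all `n ≥ rk` and
all partitions of `[n]` with blocks of size at most `r`, the chromatic number of
`KG^r(n,k,P)` equals `⌈(n - r(k-1))/(r-1)⌉`. -/
def ErdosKneserProperty (r : ℕ) : Prop :=
  ∀ n k l : ℕ, ∀ P : Fin l → Finset (Fin n),
    1 ≤ k → r * k ≤ n → IsPartition n l P → (∀ j, (P j).card ≤ r) →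
      hypChromatic (KGPEdges n k l r P) = ((n - r * (k - 1)) ⌈/⌉ (r - 1) : ℕ)

/-!
The upper bound is the usual colouring by the position of the minimum. For the lower bound let
`c` use `C < ⌈(n - r₁r₂(k-1))/(r₁r₂-1)⌉` colours. Cutting each block of `P` into pieces of at
most `r₁` elements gives a partition `Q`, and a set meeting every piece at most once meets every
block of `P` at most `r₂` times. Put `K = r₂(k-1) + (r₂-1)C + 1`. On each vertex `B` of
`KG^{r₁}(n,K,Q)` the property for `r₂` (applied to the trace of `P` on `B`) gives `r₂` disjoint
`k`-subsets of `B` of one colour; recording that colour `C`-colours `KG^{r₁}(n,K,Q)`, and since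
`r₁(K-1) + (r₁-1)C = r₁r₂(k-1) + (r₁r₂-1)C < n` the property for `r₁` yields `r₁` disjoint such `B`
of one colour. Their `r₁r₂` chosen `k`-sets form a monochromatic edge.
-/

lemma Finset.card_le_of_injOn_of_div_eq {α : Type*} {s : Finset α} {f : α → ℕ}
    (hf : Set.InjOn f s) {d i : ℕ} (hd : 0 < d) (hi : ∀ x ∈ s, f x / d = i) : #s ≤ d := by
  have hmod : Set.InjOn (fun x => f x % d) s := fun x hx y hy hxy => hf hx hy <| by
    rw [← Nat.div_add_mod (f x) d, ← Nat.div_add_mod (f y) d, hi x hx, hi y hy]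
    exact congrArg (d * i + ·) hxy
  simpa using card_le_card_of_injOn _ (fun x _ => mem_range.2 (Nat.mod_lt _ hd)) hmod

lemma Finset.exists_injOn_lt_card {α : Type*} (s : Finset α) :
    ∃ f : α → ℕ, Set.InjOn f s ∧ ∀ x ∈ s, f x < #s := by
  classical
  refine ⟨fun x => if h : x ∈ s then s.equivFin ⟨x, h⟩ else 0, fun x hx y hy hxy => ?_,
    fun x hx => by simp [hx]⟩
  simp only [mem_coe] at hx hy
  simp only [hx, hy, dite_true] at hxy
  exact congrArg Subtype.val (s.equivFin.injective (Fin.ext hxy))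

lemma Nat.mul_eq_mul_sub_one_add {r k : ℕ} (hk : 0 < k) : r * k = r * (k - 1) + r := by
  rw [← Nat.mul_add_one, Nat.sub_add_cancel hk]

lemma lt_ceilDiv_iff_mul_lt {a b c : ℕ} (ha : 0 < a) : c < b ⌈/⌉ a ↔ a * c < b :=
  (gc_mul_ceilDiv ha).lt_iff_lt

section Coloring

variable {V : Type*} {E : Set (Multiset V)}

lemma hypChromatic_le {t : ℕ} (c : V → Fin t) (hc : IsProperColoring E c) :
    hypChromatic E ≤ t :=
  sInf_le ⟨t, rfl, c, hc⟩

lemma IsProperColoring.comp_injective {t s : ℕ} {c : V → Fin t} (hc : IsProperColoring E c)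
    {f : Fin t → Fin s} (hf : f.Injective) : IsProperColoring E (f ∘ c) := by
  intro e he
  obtain ⟨a, ha, b, hb, hab⟩ := hc e he
  exact ⟨a, ha, b, hb, hf.ne hab⟩

lemma IsProperColoring.not_monochromatic {t : ℕ} {c : V → Fin t} (hc : IsProperColoring E c)
    {e : Multiset V} (he : e ∈ E) (α : Fin t) : ¬ ∀ a ∈ e, c a = α := by
  intro hα
  obtain ⟨a, ha, b, hb, hab⟩ := hc e he
  exact hab ((hα a ha).trans (hα b hb).symm)

lemma exists_monochromatic_of_lt_hypChromatic {T C : ℕ} (hE : hypChromatic E = T)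
    (h0 : 0 ∉ E) (hC : C < T) (c : V → Fin C) : ∃ e ∈ E, ∃ α, ∀ a ∈ e, c a = α := by
  have hc : ¬ IsProperColoring E c := fun hc => by
    have := hE ▸ hypChromatic_le c hc
    exact absurd (ENat.natCast_le_natCast.1 this) (not_le.2 hC)
  simp only [IsProperColoring, not_forall, not_exists, not_and, not_not] at hc
  obtain ⟨e, he, hmono⟩ := hc
  obtain ⟨a, ha⟩ := Multiset.exists_mem_of_ne_zero (ne_of_mem_of_not_mem he h0)
  exact ⟨e, he, c a, fun b hb => hmono b hb a ha⟩

/-- The case of no colours at all is covered by the one-colour case, since `1 < T`. -/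
lemma le_hypChromatic {T : ℕ} (hT : 1 < T)
    (h : ∀ C, 0 < C → C < T → ∀ c : V → Fin C, ∃ e ∈ E, ∃ α, ∀ a ∈ e, c a = α) :
    (T : ℕ∞) ≤ hypChromatic E := by
  refine le_sInf ?_
  rintro _ ⟨C, rfl, c, hc⟩
  by_contra! hCT
  norm_cast at hCT
  rcases Nat.eq_zero_or_pos C with rfl | hC
  · obtain ⟨e, he, α, hα⟩ := h 1 one_pos hT (Fin.castSucc ∘ c)
    exact hc.comp_injective (Fin.castSucc_injective 0) |>.not_monochromatic he α hα
  · obtain ⟨e, he, α, hα⟩ := h C hC hCT c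
    exact hc.not_monochromatic he α hα

end Coloring

section KneserEdges

variable {n k l r : ℕ} {P : Fin l → Finset (Fin n)}

lemma KGPVertex.nonempty (hk : 1 ≤ k) (a : KGPVertex n k l P) : a.1.Nonempty :=
  Finset.card_pos.1 (by rw [a.2.1]; omega)

lemma zero_notMem_KGPEdges (hr : r ≠ 0) : 0 ∉ KGPEdges n k l r P :=
  fun h => hr (h.1.symm.trans Multiset.card_zero)

lemma card_toFinset_of_mem_KGPEdges [DecidableEq (KGPVertex n k l P)]
    {e : Multiset (KGPVertex n k l P)} (he : e ∈ KGPEdges n k l r P) : #e.toFinset = r :=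
  (Multiset.toFinset_card_of_nodup he.2.1).trans he.1

lemma card_le_of_mem_KGPEdges {e : Multiset (KGPVertex n k l P)} (he : e ∈ KGPEdges n k l r P)
    {T : Finset (Fin n)} (hT : ∀ a ∈ e, a.1 ⊆ T) : r * k ≤ #T := by
  classical
  have hdisj : (e.toFinset : Set (KGPVertex n k l P)).PairwiseDisjoint Subtype.val :=
    fun a ha b hb hab => he.2.2 a (by simpa using ha) b (by simpa using hb) hab
  calc r * k = ∑ a ∈ e.toFinset, #a.1 := by
        simp [fun a : KGPVertex n k l P => a.2.1, card_toFinset_of_mem_KGPEdges he]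
    _ = #(e.toFinset.biUnion Subtype.val) := (card_biUnion hdisj).symm
    _ ≤ #T := card_le_card (biUnion_subset.2 fun a ha => hT a (by simpa using ha))

lemma bind_mem_KGPEdges {K l' r' : ℕ} {Q : Fin l' → Finset (Fin n)} (hk : 1 ≤ k)
    {e : Multiset (KGPVertex n K l' Q)} (he : e ∈ KGPEdges n K l' r Q)
    {fam : KGPVertex n K l' Q → Multiset (KGPVertex n k l P)}
    (hfam : ∀ B, fam B ∈ KGPEdges n k l r' P) (hsub : ∀ B, ∀ a ∈ fam B, a.1 ⊆ B.1) :
    e.bind fam ∈ KGPEdges n k l (r * r') P := by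
  obtain ⟨hcard, hnd, hdisj⟩ := he
  have hfar : ∀ B ∈ e, ∀ B' ∈ e, B ≠ B' → ∀ a ∈ fam B, ∀ a' ∈ fam B', Disjoint a.1 a'.1 :=
    fun B hB B' hB' hBB' a ha a' ha' =>
      (hdisj B hB B' hB' hBB').mono (hsub B a ha) (hsub B' a' ha')
  refine ⟨?_, ?_, ?_⟩
  · simp [Multiset.card_bind, fun B => (hfam B).1, hcard]
  · refine Multiset.nodup_bind.2 ⟨fun B _ => (hfam B).2.1, hnd.pairwise ?_⟩
    intro B hB B' hB' hBB'
    refine Multiset.disjoint_left.2 fun {a} ha ha' => ?_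
    obtain ⟨x, hx⟩ := a.nonempty hk
    exact Finset.disjoint_left.1 (hfar B hB B' hB' hBB' a ha a ha') hx hx
  · simp only [Multiset.mem_bind]
    rintro a ⟨B, hB, ha⟩ a' ⟨B', hB', ha'⟩ haa'
    by_cases hBB' : B = B'
    · subst hBB'
      exact (hfam B).2.2 a ha a' ha' haa'
    · exact hfar B hB B' hB' hBB' a ha a' ha'

end KneserEdges

section UpperBound

variable {n k l r : ℕ} {P : Fin l → Finset (Fin n)} {e : Multiset (KGPVertex n k l P)}

lemma le_of_mem_KGPEdges_of_div_eq (he : e ∈ KGPEdges n k l r P)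
    {x : KGPVertex n k l P → Fin n} (hx : ∀ a ∈ e, x a ∈ a.1) {d i : ℕ} (hd : 0 < d)
    (hi : ∀ a ∈ e, (x a : ℕ) / d = i) : r ≤ d := by
  classical
  have hinj : Set.InjOn (fun a => (x a : ℕ)) e.toFinset := by
    intro a ha b hb hab
    simp only [Finset.mem_coe, Multiset.mem_toFinset] at ha hb
    by_contra hab'
    exact Finset.disjoint_left.1 (he.2.2 a ha b hb hab') (hx a ha) (Fin.ext hab ▸ hx b hb)
  rw [← card_toFinset_of_mem_KGPEdges he]
  exact card_le_of_injOn_of_div_eq hinj hd fun a ha => hi a (Multiset.mem_toFinset.1 ha)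

lemma card_le_sub_of_forall_le {T : Finset (Fin n)} {s : ℕ} (hT : ∀ y ∈ T, s ≤ (y : ℕ)) :
    #T ≤ n - s := by
  simpa using card_le_card_of_injOn Fin.val (fun y hy => mem_Ico.2 ⟨hT y hy, y.2⟩)
    Fin.val_injective.injOn

lemma mul_le_sub_of_mem_KGPEdges (he : e ∈ KGPEdges n k l r P) {s : ℕ}
    (hs : ∀ a ∈ e, ∀ y ∈ a.1, s ≤ (y : ℕ)) : r * k ≤ n - s :=
  (card_le_of_mem_KGPEdges he (T := {y | s ≤ (y : ℕ)}) fun a ha y hy => by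
    simpa using hs a ha y hy).trans (card_le_sub_of_forall_le fun y hy => by simpa using hy)

/-- Colour `A` by the index of the run of `r - 1` consecutive integers containing `min A`,
lumping all runs from the `t`-th on into the last colour. -/
theorem exists_isProperColoring_KGPEdges (hr : 2 ≤ r) (hk : 1 ≤ k) (hn : r * k ≤ n) :
    ∃ c : KGPVertex n k l P → Fin ((n - r * (k - 1)) ⌈/⌉ (r - 1)),
      IsProperColoring (KGPEdges n k l r P) c := by
  set t := (n - r * (k - 1)) ⌈/⌉ (r - 1)
  have hrk : r * k = r * (k - 1) + r := Nat.mul_eq_mul_sub_one_add hk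
  have ht : 0 < t := (lt_ceilDiv_iff_mul_lt (by omega)).2 (by omega)
  have htn : n - r * (k - 1) ≤ (r - 1) * t := (ceilDiv_le_iff_le_mul (by omega)).1 le_rfl
  let m : KGPVertex n k l P → Fin n := fun a => a.1.min' (a.nonempty hk)
  refine ⟨fun a => ⟨min ((m a : ℕ) / (r - 1)) (t - 1), by omega⟩, fun e he => ?_⟩
  obtain ⟨a₀, ha₀⟩ := Multiset.exists_mem_of_ne_zero (ne_of_mem_of_not_mem he
    (zero_notMem_KGPEdges (by omega)))
  by_contra! hmono
  have hcol : ∀ a ∈ e, min ((m a : ℕ) / (r - 1)) (t - 1) = min ((m a₀ : ℕ) / (r - 1)) (t - 1) :=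
    fun a ha => congrArg Fin.val (hmono a ha a₀ ha₀)
  by_cases hlast : (m a₀ : ℕ) / (r - 1) < t - 1
  · have := le_of_mem_KGPEdges_of_div_eq (x := m) (d := r - 1) (i := (m a₀ : ℕ) / (r - 1)) he
      (fun a _ => min'_mem _ _) (by omega) (fun a ha => by have := hcol a ha; omega)
    omega
  · have hge : ∀ a ∈ e, ∀ y ∈ a.1, (t - 1) * (r - 1) ≤ (y : ℕ) := fun a ha y hy =>
      calc (t - 1) * (r - 1) ≤ (m a : ℕ) / (r - 1) * (r - 1) :=
            Nat.mul_le_mul_right _ (by have := hcol a ha; omega)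
        _ ≤ m a := Nat.div_mul_le_self _ _
        _ ≤ y := min'_le _ _ hy
    have := mul_le_sub_of_mem_KGPEdges he hge
    have : (t - 1) * (r - 1) + (r - 1) = (r - 1) * t := by
      rw [← Nat.add_one_mul, Nat.sub_add_cancel ht, Nat.mul_comm]
    omega

end UpperBound

namespace IsPartition

variable {n l : ℕ} {P : Fin l → Finset (Fin n)}

noncomputable def blockOf (hP : IsPartition n l P) (x : Fin n) : Fin l :=
  (hP.2 x).exists.choose

lemma mem_blockOf (hP : IsPartition n l P) (x : Fin n) : x ∈ P (hP.blockOf x) :=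
  (hP.2 x).exists.choose_spec

lemma blockOf_eq (hP : IsPartition n l P) {x : Fin n} {j : Fin l} (hx : x ∈ P j) :
    hP.blockOf x = j :=
  (hP.2 x).unique (hP.mem_blockOf x) hx

end IsPartition

lemma exists_isPartition_fibers {N : ℕ} {β : Type*} [DecidableEq β] (g : Fin N → β) :
    ∃ (l : ℕ) (Q : Fin l → Finset (Fin N)), IsPartition N l Q ∧
      ∀ m, ∀ x ∈ Q m, ∀ y, y ∈ Q m ↔ g y = g x := by
  set S := univ.image g
  let v : Fin #S → β := fun m => S.equivFin.symm m
  refine ⟨#S, fun m => {x | g x = v m}, ⟨fun m => ?_, fun x => ?_⟩, fun m x hx y => ?_⟩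
  · obtain ⟨x, -, hx⟩ := mem_image.1 (S.equivFin.symm m).2
    exact ⟨x, by simpa [v] using hx⟩
  · refine ⟨S.equivFin ⟨g x, mem_image_of_mem g (mem_univ x)⟩, by simp [v], fun m hm => ?_⟩
    simp only [mem_filter, mem_univ, true_and] at hm
    rw [← Equiv.symm_apply_eq]
    exact Subtype.ext hm.symm
  · simp only [mem_filter, mem_univ, true_and] at hx ⊢
    rw [hx]

/-- Cut every block of `P` into at most `r₂` pieces of at most `r₁` elements. -/
lemma exists_isPartition_refinement {n l r₁ r₂ : ℕ} {P : Fin l → Finset (Fin n)}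
    (hP : IsPartition n l P) (hPr : ∀ j, #(P j) ≤ r₁ * r₂) (hr₁ : 0 < r₁) :
    ∃ (l' : ℕ) (Q : Fin l' → Finset (Fin n)), IsPartition n l' Q ∧ (∀ m, #(Q m) ≤ r₁) ∧
      ∀ B : Finset (Fin n), (∀ m, #(B ∩ Q m) ≤ 1) → ∀ j, #(B ∩ P j) ≤ r₂ := by
  choose idx hidx_inj hidx_lt using fun j => (P j).exists_injOn_lt_card
  let key : Fin n → Fin l × ℕ := fun x => (hP.blockOf x, idx (hP.blockOf x) x / r₁)
  obtain ⟨l', Q, hQ, hQkey⟩ := exists_isPartition_fibers key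
  have hkey : ∀ {x y j}, x ∈ P j → y ∈ P j → idx j x / r₁ = idx j y / r₁ → key x = key y := by
    intro x y j hx hy hxy
    simp only [key, hP.blockOf_eq hx, hP.blockOf_eq hy, hxy]
  refine ⟨l', Q, hQ, fun m => ?_, fun B hB j => ?_⟩
  · obtain ⟨x, hx⟩ := hQ.1 m
    set j := hP.blockOf x
    have hQP : ∀ y ∈ Q m, y ∈ P j ∧ idx j y / r₁ = idx j x / r₁ := fun y hy => by
      obtain ⟨hj, hq⟩ := Prod.ext_iff.1 ((hQkey m x hx y).1 hy)
      change hP.blockOf y = j at hj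
      change idx (hP.blockOf y) y / r₁ = idx j x / r₁ at hq
      rw [hj] at hq
      exact ⟨hj ▸ hP.mem_blockOf y, hq⟩
    exact card_le_of_injOn_of_div_eq (fun y hy y' hy' => hidx_inj j (hQP y hy).1 (hQP y' hy').1)
      hr₁ fun y hy => (hQP y hy).2
  · refine (card_le_card_of_injOn (fun y => idx j y / r₁) (fun y hy => ?_) ?_).trans_eq
      (card_range r₂)
    · have := (hidx_lt j y (mem_inter.1 hy).2).trans_le (hPr j)
      exact mem_range.2 ((Nat.div_lt_iff_lt_mul hr₁).2 (by rwa [Nat.mul_comm]))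
    · intro y hy y' hy' hyy'
      simp only [coe_inter, Set.mem_inter_iff, mem_coe] at hy hy'
      obtain ⟨m, hm, -⟩ := hQ.2 y
      have hy'm : y' ∈ Q m := (hQkey m y hm y').2 (hkey hy'.2 hy.2 hyy'.symm)
      exact card_le_one.1 (hB m) y (mem_inter.2 ⟨hy.1, hm⟩) y' (mem_inter.2 ⟨hy'.1, hy'm⟩)

section Transfer

variable {n k l K l' : ℕ} {P : Fin l → Finset (Fin n)} {Q : Fin l' → Finset (Fin K)}

def KGPVertex.map (f : Fin K ↪ Fin n)
    (hf : ∀ i i' j, f i ∈ P j → f i' ∈ P j → ∃ m, i ∈ Q m ∧ i' ∈ Q m)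
    (S : KGPVertex K k l' Q) : KGPVertex n k l P :=
  ⟨S.1.map f, by rw [card_map, S.2.1], fun j => card_le_one.2 fun a ha b hb => by
    simp only [mem_inter, mem_map] at ha hb
    obtain ⟨⟨i, hi, rfl⟩, hij⟩ := ha
    obtain ⟨⟨i', hi', rfl⟩, hi'j⟩ := hb
    obtain ⟨m, him, hi'm⟩ := hf i i' j hij hi'j
    rw [card_le_one.1 (S.2.2 m) i (mem_inter.2 ⟨hi, him⟩) i' (mem_inter.2 ⟨hi', hi'm⟩)]⟩

lemma KGPVertex.map_mem_KGPEdges {f : Fin K ↪ Fin n}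
    {hf : ∀ i i' j, f i ∈ P j → f i' ∈ P j → ∃ m, i ∈ Q m ∧ i' ∈ Q m} {r : ℕ}
    {e : Multiset (KGPVertex K k l' Q)} (he : e ∈ KGPEdges K k l' r Q) :
    e.map (KGPVertex.map f hf) ∈ KGPEdges n k l r P := by
  obtain ⟨hcard, hnd, hdisj⟩ := he
  refine ⟨by rw [Multiset.card_map, hcard], hnd.map fun S S' h =>
    Subtype.ext (map_injective f (congrArg Subtype.val h)), ?_⟩
  simp only [Multiset.mem_map]
  rintro _ ⟨S, hS, rfl⟩ _ ⟨S', hS', rfl⟩ hSS'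
  exact (disjoint_map f).2 (hdisj S hS S' hS' fun h => hSS' (h ▸ rfl))

end Transfer

/-- Applies the property for `r` to the trace of `P` on `B ≅ [K]`. -/
lemma exists_monochromatic_KGPEdges_subset {n k l r K C : ℕ} {P : Fin l → Finset (Fin n)}
    (H : ErdosKneserProperty r) (hr : 0 < r) (hk : 1 ≤ k) (hP : IsPartition n l P)
    {B : Finset (Fin n)} (hB : #B = K) (hBP : ∀ j, #(B ∩ P j) ≤ r) (hK : r * k ≤ K)
    (hC : C < (K - r * (k - 1)) ⌈/⌉ (r - 1)) (c : KGPVertex n k l P → Fin C) :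
    ∃ e ∈ KGPEdges n k l r P, (∀ a ∈ e, a.1 ⊆ B) ∧ ∃ α, ∀ a ∈ e, c a = α := by
  let f : Fin K ↪ Fin n := (B.orderEmbOfFin hB).toEmbedding
  obtain ⟨l', Q, hQ, hQf⟩ := exists_isPartition_fibers (hP.blockOf ∘ f)
  have hf : ∀ i i' j, f i ∈ P j → f i' ∈ P j → ∃ m, i ∈ Q m ∧ i' ∈ Q m := by
    intro i i' j hi hi'
    obtain ⟨m, hm, -⟩ := hQ.2 i
    exact ⟨m, hm, (hQf m i hm i').2 (by simp [hP.blockOf_eq hi, hP.blockOf_eq hi'])⟩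
  have hQr : ∀ m, #(Q m) ≤ r := by
    intro m
    obtain ⟨i, hi⟩ := hQ.1 m
    refine le_trans ?_ (hBP (hP.blockOf (f i)))
    rw [← card_map f]
    refine card_le_card fun x hx => ?_
    obtain ⟨i', hi', rfl⟩ := mem_map.1 hx
    have : hP.blockOf (f i') = hP.blockOf (f i) := (hQf m i hi i').1 hi'
    exact mem_inter.2 ⟨orderEmbOfFin_mem _ _ _, this ▸ hP.mem_blockOf _⟩
  obtain ⟨e, he, α, hα⟩ := exists_monochromatic_of_lt_hypChromatic
    (H K k l' Q hk hK hQ hQr) (zero_notMem_KGPEdges hr.ne') hC (c ∘ KGPVertex.map f hf)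
  refine ⟨e.map (KGPVertex.map f hf), KGPVertex.map_mem_KGPEdges he, ?_, α, ?_⟩
  · simp only [Multiset.mem_map]
    rintro _ ⟨S, -, rfl⟩ x hx
    obtain ⟨i, -, rfl⟩ := mem_map.1 hx
    exact orderEmbOfFin_mem _ _ _
  · simpa using hα

theorem exists_monochromatic_KGPEdges_mul {r₁ r₂ n k l C : ℕ} {P : Fin l → Finset (Fin n)}
    (H₁ : ErdosKneserProperty r₁) (H₂ : ErdosKneserProperty r₂) (h₁ : 2 ≤ r₁) (h₂ : 2 ≤ r₂)
    (hk : 1 ≤ k) (hP : IsPartition n l P) (hPr : ∀ j, #(P j) ≤ r₁ * r₂) (hC0 : 0 < C)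
    (hC : C < (n - r₁ * r₂ * (k - 1)) ⌈/⌉ (r₁ * r₂ - 1)) (c : KGPVertex n k l P → Fin C) :
    ∃ e ∈ KGPEdges n k l (r₁ * r₂) P, ∃ α, ∀ a ∈ e, c a = α := by
  have hr : 4 ≤ r₁ * r₂ := Nat.mul_le_mul h₁ h₂
  rw [lt_ceilDiv_iff_mul_lt (by omega)] at hC
  set K := r₂ * (k - 1) + (r₂ - 1) * C + 1
  have hid : r₁ * (K - 1) + (r₁ - 1) * C = r₁ * r₂ * (k - 1) + (r₁ * r₂ - 1) * C := by
    obtain ⟨a, rfl⟩ : ∃ a, r₁ = a + 1 := ⟨r₁ - 1, by omega⟩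
    obtain ⟨b, rfl⟩ : ∃ b, r₂ = b + 1 := ⟨r₂ - 1, by omega⟩
    simp only [K, Nat.add_sub_cancel, show (a + 1) * (b + 1) - 1 = a * b + a + b by ring_nf; omega]
    ring
  have hr₂k : r₂ * k ≤ K := by
    have : r₂ * k = r₂ * (k - 1) + r₂ := Nat.mul_eq_mul_sub_one_add hk
    have : r₂ - 1 ≤ (r₂ - 1) * C := Nat.le_mul_of_pos_right _ hC0
    omega
  have hr₁K : r₁ * K ≤ n := by
    have : r₁ * K = r₁ * (K - 1) + r₁ := Nat.mul_eq_mul_sub_one_add (by omega)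
    have : r₁ - 1 ≤ (r₁ - 1) * C := Nat.le_mul_of_pos_right _ hC0
    omega
  obtain ⟨l', Q, hQ, hQr, hQP⟩ := exists_isPartition_refinement hP hPr (by omega)
  choose fam hfam hfamB α hα using fun B : KGPVertex n K l' Q =>
    exists_monochromatic_KGPEdges_subset H₂ (by omega) hk hP B.2.1 (hQP B.1 B.2.2) hr₂k
      ((lt_ceilDiv_iff_mul_lt (by omega)).2 (by omega)) c
  obtain ⟨e, he, β, hβ⟩ := exists_monochromatic_of_lt_hypChromatic
    (H₁ n K l' Q (by omega) hr₁K hQ hQr) (zero_notMem_KGPEdges (by omega))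
    ((lt_ceilDiv_iff_mul_lt (by omega)).2 (by omega)) α
  refine ⟨e.bind fam, bind_mem_KGPEdges hk he hfam hfamB, β, fun a ha => ?_⟩
  obtain ⟨B, hB, haB⟩ := Multiset.mem_bind.1 ha
  rw [hα B a haB, hβ B hB]

theorem erdosKneser_mul (r₁ r₂ : ℕ) (h₁ : 2 ≤ r₁) (h₂ : 2 ≤ r₂)
    (H₁ : ErdosKneserProperty r₁) (H₂ : ErdosKneserProperty r₂) :
    ErdosKneserProperty (r₁ * r₂) := by
  intro n k l P hk hn hP hPr
  have hr : 4 ≤ r₁ * r₂ := Nat.mul_le_mul h₁ h₂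
  have hrk : r₁ * r₂ * k = r₁ * r₂ * (k - 1) + r₁ * r₂ := Nat.mul_eq_mul_sub_one_add hk
  obtain ⟨c, hc⟩ := exists_isProperColoring_KGPEdges (P := P) (by omega) hk hn
  refine le_antisymm (hypChromatic_le c hc) (le_hypChromatic ?_ fun C hC0 hC c =>
    exists_monochromatic_KGPEdges_mul H₁ H₂ h₁ h₂ hk hP hPr hC0 hC c)
  exact (lt_ceilDiv_iff_mul_lt (by omega)).2 (by omega)
end
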